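/- Let s be a positive integer and define a_s(n) as the n-th coefficient of Δ^{(9^s-1)/8}. If a_s(n) ≢ 0 (mod 3), then n ≡ 1 (mod 3). -/

import Mathlib

open PowerSeries Finset
open scoped PowerSeries

/-- `Δ = q·∏_{k≥1}(1-q^k)^{24}` over `ℤ`, defined coefficientwise via stabilized
partial products. -/
noncomputable def Delta : PowerSeries ℤ :=
  PowerSeries.mk fun n =>
    PowerSeries.coeff n
      (PowerSeries.X * ∏ k ∈ Finset.range (n + 1), (1 - (PowerSeries.X : PowerSeries ℤ) ^ (k + 1)) ^ 24)

/-- Ramanujan's tau function: the `n`-th coefficient of `Δ`. -/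
noncomputable def tau (n : ℕ) : ℤ := PowerSeries.coeff n Delta

/-- `a_s(n)`: the `n`-th coefficient of `Δ^{(9^s-1)/8}`. -/
noncomputable def aCoeff (s n : ℕ) : ℤ :=
  PowerSeries.coeff n (Delta ^ ((9 ^ s - 1) / 8))

/-!
Reduced mod 3, each factor `(1 - q^k)^24 = ((1 - q^k)^3)^8 = (1 - q^{3k})^8` of `Δ` only has
exponents divisible by 3, so `Δ mod 3` is supported on exponents `≡ 1 (mod 3)`. Exponents add
under multiplication, hence `Δ^m mod 3` is supported on exponents `≡ m (mod 3)`, and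
`m = (9^s - 1)/8 = 1 + 9 + ⋯ + 9^{s-1} ≡ 1 (mod 3)`.
-/

namespace PowerSeries

variable {R : Type*}

def SupportedMod [Semiring R] (d : ℕ) (a : ZMod d) (f : R⟦X⟧) : Prop :=
  ∀ n, coeff n f ≠ 0 → (n : ZMod d) = a

section Semiring

variable [Semiring R] {d : ℕ} {a b : ZMod d} {f g : R⟦X⟧}

theorem supportedMod_one : SupportedMod d 0 (1 : R⟦X⟧) := by
  intro n hn
  obtain rfl : n = 0 := by by_contra h0; simp [coeff_one, h0] at hn
  exact Nat.cast_zero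

theorem supportedMod_X : SupportedMod d 1 (X : R⟦X⟧) := by
  intro n hn
  obtain rfl : n = 1 := by by_contra h1; simp [coeff_X, h1] at hn
  exact Nat.cast_one

theorem SupportedMod.mul (hf : SupportedMod d a f) (hg : SupportedMod d b g) :
    SupportedMod d (a + b) (f * g) := by
  intro n hn
  rw [coeff_mul] at hn
  obtain ⟨⟨i, j⟩, hij, hne⟩ := exists_ne_zero_of_sum_ne_zero hn
  rw [← mem_antidiagonal.mp hij, Nat.cast_add, hf i (left_ne_zero_of_mul hne),
    hg j (right_ne_zero_of_mul hne)]

theorem SupportedMod.pow (hf : SupportedMod d a f) (m : ℕ) : SupportedMod d (m * a) (f ^ m) := by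
  induction m with
  | zero => simpa using supportedMod_one
  | succ m ih => simpa [pow_succ, add_mul] using ih.mul hf

end Semiring

theorem SupportedMod.prod [CommSemiring R] {d : ℕ} {ι : Type*} {s : Finset ι}
    {F : ι → R⟦X⟧} (hF : ∀ i ∈ s, SupportedMod d 0 (F i)) : SupportedMod d 0 (∏ i ∈ s, F i) :=
  prod_induction F (SupportedMod d 0) (fun _ _ hf hg => by simpa using hf.mul hg)
    supportedMod_one hF

theorem supportedMod_one_sub_X_pow [Ring R] {d j : ℕ} (hj : (j : ZMod d) = 0) :
    SupportedMod d 0 (1 - X ^ j : R⟦X⟧) := by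
  intro n hn
  obtain rfl | rfl : n = 0 ∨ n = j := by
    by_contra! h
    simp [coeff_one, coeff_X_pow, h.1, h.2] at hn
  exacts [Nat.cast_zero, hj]

theorem one_sub_X_pow_pow_char [CommRing R] (p : ℕ) [Fact p.Prime] [CharP R p] (j : ℕ) :
    (1 - X ^ j : R⟦X⟧) ^ p = 1 - X ^ (p * j) := by
  have : CharP R⟦X⟧ p := charP_of_injective_ringHom C_injective p
  rw [sub_pow_char, one_pow, ← pow_mul, mul_comm]

end PowerSeries

theorem coeff_map_Delta {R : Type*} [CommRing R] (n : ℕ) :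
    coeff n (map (Int.castRingHom R) Delta)
      = coeff n (X * ∏ k ∈ range (n + 1), (1 - X ^ (k + 1) : R⟦X⟧) ^ 24) := by
  rw [coeff_map, Delta, coeff_mk, ← coeff_map]
  simp [map_prod]

theorem supportedMod_map_Delta {R : Type*} [CommRing R] [CharP R 3] :
    SupportedMod 3 1 (map (Int.castRingHom R) Delta) := by
  have hfactor (k : ℕ) : SupportedMod 3 0 ((1 - X ^ (k + 1) : R⟦X⟧) ^ 24) := by
    rw [show 24 = 3 * 8 by rfl, pow_mul, one_sub_X_pow_pow_char]
    have h3 : ((3 * (k + 1) : ℕ) : ZMod 3) = 0 := by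
      rw [Nat.cast_mul, ZMod.natCast_self, zero_mul]
    simpa using (supportedMod_one_sub_X_pow h3).pow 8
  intro n hn
  rw [coeff_map_Delta] at hn
  simpa using supportedMod_X.mul (SupportedMod.prod fun k _ => hfactor k) n hn

theorem nine_pow_sub_one_div_eight_mod_three {s : ℕ} (hs : 0 < s) : (9 ^ s - 1) / 8 % 3 = 1 := by
  have h8 : 9 ^ s % 8 = 1 := by simp [Nat.pow_mod]
  have h3 : 9 ^ s % 3 = 0 := by simp [Nat.pow_mod, hs.ne']
  have h1 : 1 ≤ 9 ^ s := Nat.one_le_pow _ _ (by norm_num)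
  omega

/-- If `a_s(n) ≢ 0 (mod 3)` then `n ≡ 1 (mod 3)`. -/
theorem aCoeff_ne_zero_mod_three_imp (s : ℕ) (hs : 0 < s) (n : ℕ)
    (h : ¬ (3 : ℤ) ∣ aCoeff s n) : n % 3 = 1 := by
  set m := (9 ^ s - 1) / 8
  have hm : (m : ZMod 3) = 1 := by
    rw [← ZMod.natCast_mod, nine_pow_sub_one_div_eight_mod_three hs, Nat.cast_one]
  have hsupp : SupportedMod 3 1 (map (Int.castRingHom (ZMod 3)) Delta ^ m) := by
    simpa [hm] using supportedMod_map_Delta.pow m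
  have hne : coeff n (map (Int.castRingHom (ZMod 3)) Delta ^ m) ≠ 0 := by
    rwa [← map_pow, coeff_map, eq_intCast, ne_eq, ZMod.intCast_zmod_eq_zero_iff_dvd]
  simpa using (ZMod.natCast_eq_natCast_iff' n 1 3).mp (by simpa using hsupp n hne)
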